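/- arXiv:2203.04917 — 3 statements merged into one kernel-verified Lean document; each statement's English description precedes it below -/
import Mathlib

section
/- Let α ∈ (0,1], R > 0, H ≥ 0, and let f : ℝ → ℂ be supported in [-R, R] and satisfy |f(x) - f(y)| ≤ H·|x - y|^α for all x, y ∈ ℝ. Then for every ω ∈ ℝ with ω ≠ 0, |∫_ℝ f(s)·e^{iωs} ds| ≤ (R + π/|ω|)·H·(π/|ω|)^α. -/
open MeasureTheory Real Function Set

/-!
Write `T = π / ω`, so that `e^{iω(s+T)} = -e^{iωs}`. Translating the integral by `T` therefore
gives `2 ∫ f(s) e^{iωs} ds = ∫ (f(s) - f(s+T)) e^{iωs} ds`. The new integrand is bounded by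
`H |T|^α` and supported in `[-R - |T|, R + |T|]`, which yields the bound.
-/

theorem continuous_of_norm_sub_le_mul_dist_rpow {X E : Type*} [PseudoMetricSpace X]
    [SeminormedAddCommGroup E] {f : X → E} {H α : ℝ} (hα : 0 < α)
    (hf : ∀ x y, ‖f x - f y‖ ≤ H * dist x y ^ α) : Continuous f := by
  refine continuous_iff_continuousAt.2 fun x => tendsto_iff_norm_sub_tendsto_zero.2 <|
    squeeze_zero (fun _ => norm_nonneg _) (fun y => hf y x) ?_
  have hcont : Continuous fun y => H * dist y x ^ α :=
    ((continuous_id.dist continuous_const).rpow_const fun _ => Or.inr hα.le).const_mul H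
  simpa [Real.zero_rpow hα.ne'] using hcont.tendsto x

theorem support_sub_comp_add_const_subset {G : Type*} [AddGroup G] {f : ℝ → G} {a b : ℝ} (hf : support f ⊆ Icc a b)
    (T : ℝ) : support (fun s => f s - f (s + T)) ⊆ Icc (a - |T|) (b + |T|) := by
  refine (support_sub _ _).trans (union_subset ?_ ?_)
  · exact hf.trans (Icc_subset_Icc (by linarith [abs_nonneg T]) (by linarith [abs_nonneg T]))
  · rw [show (fun s => f (s + T)) = f ∘ (· + T) from rfl, support_comp_eq_preimage]
    refine (preimage_mono hf).trans ?_
    rw [preimage_add_const_Icc]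
    exact Icc_subset_Icc (by linarith [le_abs_self T]) (by linarith [neg_abs_le T])

theorem norm_integral_le_of_support_subset_Icc {E : Type*} [NormedAddCommGroup E]
    [NormedSpace ℝ E] {g : ℝ → E} {a b C : ℝ} (hab : a ≤ b) (hg : support g ⊆ Icc a b)
    (hC : ∀ s, ‖g s‖ ≤ C) : ‖∫ s, g s‖ ≤ (b - a) * C := by
  rw [← setIntegral_eq_integral_of_forall_compl_eq_zero fun s hs => notMem_support.1 (hs <| hg ·)]
  calc ‖∫ s in Icc a b, g s‖ ≤ C * volume.real (Icc a b) :=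
        norm_setIntegral_le_of_norm_le_const measure_Icc_lt_top fun s _ => hC s
    _ = (b - a) * C := by rw [Real.volume_real_Icc_of_le hab, mul_comm]

theorem norm_exp_I_mul_ofReal_mul (ω s : ℝ) : ‖Complex.exp (Complex.I * ω * s)‖ = 1 := by
  rw [mul_comm Complex.I, mul_right_comm, ← Complex.ofReal_mul, Complex.norm_exp_ofReal_mul_I]

theorem exp_I_mul_add_pi_div (ω s : ℝ) (hω : ω ≠ 0) :
    Complex.exp (Complex.I * ω * ↑(s + π / ω)) = -Complex.exp (Complex.I * ω * s) := by
  have : Complex.I * ω * ↑(s + π / ω) = Complex.I * ω * s + π * Complex.I := by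
    have hω' : (ω : ℂ) ≠ 0 := by exact_mod_cast hω
    push_cast
    field_simp
  rw [this, Complex.exp_add, Complex.exp_pi_mul_I, mul_neg_one]

theorem two_mul_integral_mul_exp_eq_integral_sub_comp_add {f : ℝ → ℂ} (hf : Integrable f)
    {ω : ℝ} (hω : ω ≠ 0) :
    2 * ∫ s, f s * Complex.exp (Complex.I * ω * s) =
      ∫ s, (f s - f (s + π / ω)) * Complex.exp (Complex.I * ω * s) := by
  set e : ℝ → ℂ := fun s => Complex.exp (Complex.I * ω * s)
  have hfe : Integrable fun s => f s * e s :=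
    hf.mul_bdd (by fun_prop : Continuous e).aestronglyMeasurable (c := 1) <| .of_forall fun s =>
      (norm_exp_I_mul_ofReal_mul ω s).le
  have hshift : ∀ s, f (s + π / ω) * e s = -(f (s + π / ω) * e (s + π / ω)) := fun s => by
    simp only [e, exp_I_mul_add_pi_div ω s hω, mul_neg, neg_neg]
  have hshift_int : Integrable fun s => f (s + π / ω) * e s := by
    convert (hfe.comp_add_right (π / ω)).neg using 1
    exact funext hshift
  calc 2 * ∫ s, f s * e s = (∫ s, f s * e s) - ∫ s, f (s + π / ω) * e s := by
        simp only [hshift, integral_neg, integral_add_right_eq_self (fun s => f s * e s)]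
        ring
    _ = ∫ s, (f s - f (s + π / ω)) * e s := by
        rw [← integral_sub hfe hshift_int]
        simp only [sub_mul]

theorem oscillatory_integral_holder_bound_general
    (α R H : ℝ) (hα : α ∈ Set.Ioc (0 : ℝ) 1) (hR : 0 < R)
    (f : ℝ → ℂ) (hsupp : Function.support f ⊆ Set.Icc (-R) R)
    (hHolder : ∀ x y : ℝ, ‖f x - f y‖ ≤ H * |x - y| ^ α)
    (ω : ℝ) (hω : ω ≠ 0) :
    ‖∫ s : ℝ, f s * Complex.exp (Complex.I * (ω : ℂ) * (s : ℂ))‖ ≤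
      (R + Real.pi / |ω|) * H * (Real.pi / |ω|) ^ α := by
  have hf_int : Integrable f :=
    (continuous_of_norm_sub_le_mul_dist_rpow hα.1 (by simpa only [Real.dist_eq] using hHolder)
      ).integrable_of_hasCompactSupport (.of_support_subset_isCompact isCompact_Icc hsupp)
  have hT : |π / ω| = π / |ω| := by rw [abs_div, abs_of_pos pi_pos]
  have hdiff_le : ∀ s : ℝ, ‖(f s - f (s + π / ω)) * Complex.exp (Complex.I * ω * s)‖ ≤
      H * |π / ω| ^ α := fun s => by
    rw [norm_mul, norm_exp_I_mul_ofReal_mul, mul_one]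
    simpa using hHolder s (s + π / ω)
  have hbound := norm_integral_le_of_support_subset_Icc
    (by linarith [abs_nonneg (π / ω)])
    ((support_mul_subset_left _ _).trans (support_sub_comp_add_const_subset hsupp (π / ω)))
    hdiff_le
  rw [← two_mul_integral_mul_exp_eq_integral_sub_comp_add hf_int hω, norm_mul, hT] at hbound
  norm_num at hbound
  linarith

/-- Oscillation-cancellation estimate for Hölder amplitudes: if `f : ℝ → ℂ` is
supported in `[-R, R]` and `α`-Hölder with constant `H`, then for any nonzero
frequency `ω`, `|∫ f(s) e^{iωs} ds| ≤ (R + π/|ω|) · H · (π/|ω|)^α`. -/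
theorem oscillatory_integral_holder_bound
    (α R H : ℝ) (hα : α ∈ Set.Ioc (0 : ℝ) 1) (hR : 0 < R) (hH : 0 ≤ H)
    (f : ℝ → ℂ) (hsupp : Function.support f ⊆ Set.Icc (-R) R)
    (hHolder : ∀ x y : ℝ, ‖f x - f y‖ ≤ H * |x - y| ^ α)
    (ω : ℝ) (hω : ω ≠ 0) :
    ‖∫ s : ℝ, f s * Complex.exp (Complex.I * (ω : ℂ) * (s : ℂ))‖ ≤
      (R + Real.pi / |ω|) * H * (Real.pi / |ω|) ^ α :=
  oscillatory_integral_holder_bound_general α R H hα hR f hsupp hHolder ω hω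
end

section
/- Let d_s ≥ 1, let ϖ' ∈ (0,1] satisfy (ϖ')² + ϖ' - 1 > 0, and let 0 < ϑ < ((ϖ')² + ϖ' - 1)/(2·d_s·(1 + ϖ')). Then there exists ς₀ > 0 such that for every ς ∈ (0, ς₀) and every r ∈ (0,1], setting ρ = r^{1+ϖ'-ς/2}, |b| = r^{-2-ϖ'+ς}, and ϱ = r^{(1+ς/d_s)/(1-ϑ)}, one has ρ^{ϑ d_s} · |b|^{ϖ'} · ϱ^{ϖ'} · r^{1+ς} ≥ r^{-ς}. -/
open Real

/-!
Write `E(ς)` for the exponent of `r` in the left-hand side. It is affine in `ς`,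
`E(ς) + ς = E(0) + ς·s`, and the hypothesis on `ϑ` makes `E(0)` negative: since `ϑ < 1/2`,
`E(0) = ϑ d_s (1+ϖ') + ϖ' ϑ/(1-ϑ) - (ϖ'² + ϖ' - 1) ≤ 2 ϑ d_s (1+ϖ') - (ϖ'² + ϖ' - 1) < 0`.
The slope `s` is at most `5`, so `ς₀ = -E(0)/5` gives `E(ς) ≤ -ς`, and `r ≤ 1` reverses
the order of exponents.
-/

namespace DiscCounting

/-- The exponent of `r` in `ρ^{ϑ D} |b|^{ϖ} ϱ^{ϖ} r^{1+ς}`. -/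
noncomputable def exponent (D ϖ ϑ ς : ℝ) : ℝ :=
  (1 + ϖ - ς / 2) * (ϑ * D) + (-2 - ϖ + ς) * ϖ + (1 + ς / D) / (1 - ϑ) * ϖ + (1 + ς)

noncomputable def slope (D ϖ ϑ : ℝ) : ℝ :=
  -(ϑ * D) / 2 + ϖ + 2 + ϖ / D / (1 - ϑ)

lemma exponent_add_self (D ϖ ϑ ς : ℝ) :
    exponent D ϖ ϑ ς + ς = exponent D ϖ ϑ 0 + ς * slope D ϖ ϑ := by
  unfold exponent slope
  ring

variable {D ϖ ϑ : ℝ}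

lemma theta_lt_half (hD : 1 ≤ D) (hϖ : ϖ ∈ Set.Ioc (0 : ℝ) 1)
    (hϑ : ϑ < (ϖ ^ 2 + ϖ - 1) / (2 * D * (1 + ϖ))) : ϑ < 1 / 2 := by
  obtain ⟨hϖ0, hϖ1⟩ := hϖ
  have hpos : 0 < 2 * D * (1 + ϖ) := by positivity
  rw [lt_div_iff₀ hpos] at hϑ
  have hgold_lt : ϖ ^ 2 + ϖ - 1 < 1 / 2 * (2 * D * (1 + ϖ)) := by nlinarith
  exact lt_of_mul_lt_mul_right (hϑ.trans hgold_lt) hpos.le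

lemma exponent_zero_neg (hD : 1 ≤ D) (hϖ : ϖ ∈ Set.Ioc (0 : ℝ) 1) (hϑ0 : 0 ≤ ϑ)
    (hϑ : ϑ < (ϖ ^ 2 + ϖ - 1) / (2 * D * (1 + ϖ))) : exponent D ϖ ϑ 0 < 0 := by
  have hϑ2 := theta_lt_half hD hϖ hϑ
  obtain ⟨hϖ0, hϖ1⟩ := hϖ
  rw [lt_div_iff₀ (by positivity)] at hϑ
  have h1ϑ : 0 < 1 - ϑ := by linarith
  have hsplit : exponent D ϖ ϑ 0 =
      ϑ * D * (1 + ϖ) + ϖ * ϑ / (1 - ϑ) - (ϖ ^ 2 + ϖ - 1) := by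
    unfold exponent
    field_simp
    ring
  have hfrac : ϖ * ϑ / (1 - ϑ) ≤ 2 * ϖ * ϑ := by
    rw [div_le_iff₀ h1ϑ]
    nlinarith [mul_nonneg hϖ0.le hϑ0]
  have hcross : 2 * ϖ * ϑ ≤ ϑ * D * (1 + ϖ) := by
    nlinarith [mul_nonneg hϑ0 (sub_nonneg.2 hD), mul_nonneg hϑ0 hϖ0.le]
  linarith

lemma slope_le_five (hD : 1 ≤ D) (hϖ : ϖ ∈ Set.Icc (0 : ℝ) 1) (hϑ0 : 0 ≤ ϑ)
    (hϑ2 : ϑ < 1 / 2) : slope D ϖ ϑ ≤ 5 := by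
  obtain ⟨hϖ0, hϖ1⟩ := hϖ
  have hfrac : ϖ / D / (1 - ϑ) ≤ 2 := by
    rw [div_div, div_le_iff₀ (by nlinarith)]
    nlinarith
  unfold slope
  nlinarith

end DiscCounting

open DiscCounting in
theorem disc_counting_exponent_general
    (d_s : ℕ) (hd : 1 ≤ d_s) (ϖ' ϑ : ℝ) (hϖ : ϖ' ∈ Set.Ioc (0 : ℝ) 1)
    (hϑ0 : 0 < ϑ) (hϑ : ϑ < (ϖ' ^ 2 + ϖ' - 1) / (2 * (d_s : ℝ) * (1 + ϖ'))) :
    ∃ ς₀ > (0 : ℝ), ∀ ς ∈ Set.Ioo (0 : ℝ) ς₀, ∀ r ∈ Set.Ioc (0 : ℝ) 1,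
      (r ^ (1 + ϖ' - ς / 2)) ^ (ϑ * (d_s : ℝ)) * (r ^ (-2 - ϖ' + ς)) ^ ϖ' *
        (r ^ ((1 + ς / (d_s : ℝ)) / (1 - ϑ))) ^ ϖ' * r ^ (1 + ς) ≥ r ^ (-ς) := by
  have hD : (1 : ℝ) ≤ d_s := by exact_mod_cast hd
  have hE0 := exponent_zero_neg hD hϖ hϑ0.le hϑ
  have hslope := slope_le_five hD (Set.Ioc_subset_Icc_self hϖ) hϑ0.le (theta_lt_half hD hϖ hϑ)
  refine ⟨-exponent d_s ϖ' ϑ 0 / 5, by linarith, ?_⟩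
  rintro ς ⟨hς0, hςlt⟩ r ⟨hr0, hr1⟩
  have hexp : exponent d_s ϖ' ϑ ς ≤ -ς := by
    have hslope_mul : ς * slope d_s ϖ' ϑ ≤ ς * 5 := mul_le_mul_of_nonneg_left hslope hς0.le
    linarith [exponent_add_self d_s ϖ' ϑ ς]
  calc r ^ (-ς) ≤ r ^ exponent d_s ϖ' ϑ ς := rpow_le_rpow_of_exponent_ge hr0 hr1 hexp
    _ = _ := by
      rw [exponent, rpow_add hr0, rpow_add hr0, rpow_add hr0, rpow_mul hr0.le,
        rpow_mul hr0.le, rpow_mul hr0.le]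

/-- Key exponent computation in the proof of Theorem main2 of the errata: with
`ρ = r^{1+ϖ'-ς/2}`, `|b| = r^{-2-ϖ'+ς}` and `ϱ = r^{(1+ς/d_s)/(1-ϑ)}`, the quantity
`ρ^{ϑ d_s} |b|^{ϖ'} ϱ^{ϖ'} r^{1+ς}` is at least `r^{-ς}`, provided the golden-ratio
condition holds, `ϑ < ((ϖ')² + ϖ' - 1)/(2 d_s (1 + ϖ'))` and `ς` is small enough. -/
theorem disc_counting_exponent
    (d_s : ℕ) (hd : 1 ≤ d_s) (ϖ' ϑ : ℝ) (hϖ : ϖ' ∈ Set.Ioc (0 : ℝ) 1)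
    (hgold : ϖ' ^ 2 + ϖ' - 1 > 0)
    (hϑ0 : 0 < ϑ) (hϑ : ϑ < (ϖ' ^ 2 + ϖ' - 1) / (2 * (d_s : ℝ) * (1 + ϖ'))) :
    ∃ ς₀ > (0 : ℝ), ∀ ς ∈ Set.Ioo (0 : ℝ) ς₀, ∀ r ∈ Set.Ioc (0 : ℝ) 1,
      (r ^ (1 + ϖ' - ς / 2)) ^ (ϑ * (d_s : ℝ)) * (r ^ (-2 - ϖ' + ς)) ^ ϖ' *
        (r ^ ((1 + ς / (d_s : ℝ)) / (1 - ϑ))) ^ ϖ' * r ^ (1 + ς) ≥ r ^ (-ς) :=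
  disc_counting_exponent_general d_s hd ϖ' ϑ hϖ hϑ0 hϑ
end

section
/- Let d_s ≥ 1, let ϖ' ∈ (0,1] satisfy (ϖ')² + ϖ' - 1 > 0, and let 0 < ϑ < ((ϖ')² + ϖ' - 1)/(2·d_s·(1 + ϖ')). Then ϑ < 1/4 and ϑ·d_s·(1 + ϖ') + ϖ'/(1 - ϑ) + 1 - ϖ'·(2 + ϖ') < 0. -/
open Real

/-- The `ς = 0` form of the exponent inequality at the heart of the proof of
Theorem main2 of the errata: under the homogeneity bound
`ϑ < ((ϖ')² + ϖ' - 1)/(2 d_s (1 + ϖ'))` and the golden-ratio condition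
`(ϖ')² + ϖ' - 1 > 0`, one has `ϑ < 1/4` and the combined power of `r` is negative. -/
theorem exponent_inequality_zero_sigma
    (d_s : ℕ) (hd : 1 ≤ d_s) (ϖ' ϑ : ℝ) (hϖ : ϖ' ∈ Set.Ioc (0 : ℝ) 1)
    (hgold : ϖ' ^ 2 + ϖ' - 1 > 0)
    (hϑ0 : 0 < ϑ) (hϑ : ϑ < (ϖ' ^ 2 + ϖ' - 1) / (2 * (d_s : ℝ) * (1 + ϖ'))) :
    ϑ < 1 / 4 ∧
      ϑ * (d_s : ℝ) * (1 + ϖ') + ϖ' / (1 - ϑ) + 1 - ϖ' * (2 + ϖ') < 0 := by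
  obtain ⟨hw0, hw1⟩ := hϖ
  have hd1 : (1 : ℝ) ≤ (d_s : ℝ) := by exact_mod_cast hd
  have hden : (0 : ℝ) < 2 * (d_s : ℝ) * (1 + ϖ') := by positivity
  have hA : ϑ * (2 * (d_s : ℝ) * (1 + ϖ')) < ϖ' ^ 2 + ϖ' - 1 := (lt_div_iff₀ hden).mp hϑ
  have hmono : ϑ * (1 + ϖ') ≤ ϑ * ((d_s : ℝ) * (1 + ϖ')) := by
    have h1w : (0:ℝ) < 1 + ϖ' := by linarith
    nlinarith [mul_nonneg (mul_nonneg hϑ0.le h1w.le) (sub_nonneg.mpr hd1)]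
  have hq : ϑ < 1 / 4 := by nlinarith
  have h1ϑ : (0 : ℝ) < 1 - ϑ := by linarith
  refine ⟨hq, ?_⟩
  have hexp : (ϑ * (d_s : ℝ) * (1 + ϖ') + ϖ' / (1 - ϑ) + 1 - ϖ' * (2 + ϖ')) * (1 - ϑ)
      = (ϑ * (d_s : ℝ) * (1 + ϖ') + 1 - ϖ' * (2 + ϖ')) * (1 - ϑ) + ϖ' := by
    field_simp
    ring
  have key : (ϑ * (d_s : ℝ) * (1 + ϖ') + ϖ' / (1 - ϑ) + 1 - ϖ' * (2 + ϖ')) * (1 - ϑ) < 0 := by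
    rw [hexp]
    nlinarith [mul_pos hgold h1ϑ, mul_pos hϑ0 hgold, sq_nonneg ϖ', sq_nonneg (1 - ϖ'),
      mul_pos hgold (show (0:ℝ) < 3 - ϖ' - ϖ' ^ 2 by nlinarith)]
  by_contra h
  push_neg at h
  nlinarith [mul_nonneg h h1ϑ.le]
end
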